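/- arXiv:1606.02109 — 2 statements merged into one kernel-verified Lean document; each statement's English description precedes it below -/
import Mathlib

section
/- Let Λ and Λ₀ be positive definite d×d real matrices, let B > 0, ε > 0, and let δ be an ℝ^d-valued random vector with i.i.d. coordinates δⱼ ∼ Laplace(0, 2Bd/ε). Then the differentially private Gaussian-mean estimate μ_DP = (Λ₀ + nΛ)⁻¹(Λ(n·x̄ + δ) + Λ₀μ₀) converges to the non-private estimate μ_NP = (Λ₀ + nΛ)⁻¹(Λ·n·x̄ + Λ₀μ₀) at rate O(1/n): for every α > 0 there exist constants C and N such that for all n ≥ N, Pr{‖μ_DP − μ_NP‖₁ > C/n} < α. -/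
/-! The private and non-private estimates differ by
`(Λ₀ + nΛ)⁻¹ Λ δ = n⁻¹ (n⁻¹Λ₀ + Λ)⁻¹ Λ δ`, and `(n⁻¹Λ₀ + Λ)⁻¹ Λ → 1`, so for large `n` the
ℓ¹ error is at most `K ‖δ‖₁ / n`. The noise `‖δ‖₁` is a real random variable, hence exceeds
some level `M` with probability `< α`; take `C = K M`. -/

open MeasureTheory ProbabilityTheory Filter Matrix

/-- The Laplace distribution with location `0` and scale `b`,
with density `x ↦ (1/(2b)) · exp (−|x|/b)` with respect to Lebesgue measure. -/
noncomputable def laplaceMeasure (b : ℝ) : Measure ℝ :=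
  volume.withDensity fun x => ENNReal.ofReal ((2 * b)⁻¹ * Real.exp (-|x| / b))

/-- The ℓ¹ norm on `ℝ^d`. -/
def l1 {d : ℕ} (v : Fin d → ℝ) : ℝ := ∑ i, |v i|

/-- The posterior mean of a Gaussian mean `μ ∼ N(μ₀, Λ₀)`, `xᵢ ∼ N(μ, Λ)` (precision
parameterisation), as a function of the sample size `n` and the sufficient statistic
`s = n·x̄`: `μ(n, s) = (Λ₀ + nΛ)⁻¹ (Λ s + Λ₀ μ₀)`. -/
noncomputable def postMean {d : ℕ} (Λ Λ₀ : Matrix (Fin d) (Fin d) ℝ) (μ₀ : Fin d → ℝ)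
    (n : ℕ) (s : Fin d → ℝ) : Fin d → ℝ :=
  (Λ₀ + (n : ℝ) • Λ)⁻¹ *ᵥ (Λ *ᵥ s + Λ₀ *ᵥ μ₀)

lemma Matrix.inv_smul_of_ne_zero {n K : Type*} [Fintype n] [DecidableEq n] [Field K]
    (A : Matrix n n K) {t : K} (ht : t ≠ 0) : (t • A)⁻¹ = t⁻¹ • A⁻¹ := by
  by_cases hA : IsUnit A.det
  · simpa only [Units.smul_def, Units.val_inv_eq_inv_val, Units.val_mk0] using
      inv_smul' A (Units.mk0 t ht) hA
  · have htA : ¬IsUnit (t • A).det := by simpa [det_smul, ht] using hA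
    rw [nonsing_inv_apply_not_isUnit _ hA, nonsing_inv_apply_not_isUnit _ htA, smul_zero]

lemma Matrix.tendsto_inv_inv_smul_add_mul_atTop {n : Type*} [Fintype n] [DecidableEq n]
    {Λ : Matrix n n ℝ} (hΛ : IsUnit Λ) (Λ₀ : Matrix n n ℝ) :
    Tendsto (fun t : ℝ => (t⁻¹ • Λ₀ + Λ)⁻¹ * Λ) atTop (nhds 1) := by
  have hdet := (isUnit_iff_isUnit_det Λ).1 hΛ
  have hinv : ContinuousAt Inv.inv Λ := by
    refine continuousAt_matrix_inv _ ?_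
    rw [Ring.inverse_eq_inv']
    exact continuousAt_inv₀ hdet.ne_zero
  have hlim : Tendsto (fun t : ℝ => t⁻¹ • Λ₀ + Λ) atTop (nhds Λ) := by
    simpa using ((tendsto_inv_atTop_zero (𝕜 := ℝ)).smul_const Λ₀).add_const Λ
  simpa [nonsing_inv_mul Λ hdet] using (hinv.tendsto.comp hlim).mul_const Λ

def entrywiseL1 {m n : ℕ} (A : Matrix (Fin m) (Fin n) ℝ) : ℝ := ∑ i, ∑ j, |A i j|

lemma continuous_entrywiseL1 {m n : ℕ} : Continuous (entrywiseL1 (m := m) (n := n)) := by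
  unfold entrywiseL1; fun_prop

lemma l1_nonneg {d : ℕ} (v : Fin d → ℝ) : 0 ≤ l1 v :=
  Finset.sum_nonneg fun _ _ => abs_nonneg _

lemma l1_smul {d : ℕ} (c : ℝ) (v : Fin d → ℝ) : l1 (c • v) = |c| * l1 v := by
  simp [l1, abs_mul, Finset.mul_sum]

lemma l1_mulVec_le {m n : ℕ} (A : Matrix (Fin m) (Fin n) ℝ) (v : Fin n → ℝ) :
    l1 (A *ᵥ v) ≤ entrywiseL1 A * l1 v := by
  calc l1 (A *ᵥ v) ≤ ∑ i, ∑ j, |A i j| * |v j| := by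
        refine Finset.sum_le_sum fun i _ => ?_
        simpa only [mulVec, dotProduct, abs_mul] using
          Finset.abs_sum_le_sum_abs (fun j => A i j * v j) Finset.univ
    _ ≤ ∑ i, ∑ j, |A i j| * l1 v := by
        gcongr with i _ j
        exact Finset.single_le_sum (f := fun j => |v j|) (fun i _ => abs_nonneg (v i))
          (Finset.mem_univ j)
    _ = entrywiseL1 A * l1 v := by simp only [entrywiseL1, Finset.sum_mul]

lemma tendsto_measure_setOf_lt_atTop {Ω : Type*} [MeasurableSpace Ω] (μ : Measure Ω)
    [IsFiniteMeasure μ] {g : Ω → ℝ} (hg : AEMeasurable g μ) :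
    Tendsto (fun r : ℝ => μ {ω | r < g ω}) atTop (nhds 0) := by
  have h := tendsto_measure_iInter_atTop (μ := μ) (s := fun r : ℝ => {ω | r < g ω})
    (fun _ => nullMeasurableSet_lt aemeasurable_const hg)
    (fun _ _ hrr' _ hω => hrr'.trans_lt hω) ⟨0, measure_ne_top _ _⟩
  have hempty : ⋂ r : ℝ, {ω | r < g ω} = ∅ :=
    Set.iInter_eq_empty_iff.2 fun ω => ⟨g ω, lt_irrefl (g ω)⟩
  rwa [hempty, measure_empty] at h

lemma postMean_add_sub_postMean {d : ℕ} (Λ Λ₀ : Matrix (Fin d) (Fin d) ℝ) (μ₀ : Fin d → ℝ)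
    {n : ℕ} (hn : n ≠ 0) (s δ : Fin d → ℝ) :
    postMean Λ Λ₀ μ₀ n (s + δ) - postMean Λ Λ₀ μ₀ n s
      = (n : ℝ)⁻¹ • ((((n : ℝ)⁻¹ • Λ₀ + Λ)⁻¹ * Λ) *ᵥ δ) := by
  have hn' : (n : ℝ) ≠ 0 := Nat.cast_ne_zero.2 hn
  have hscale : Λ₀ + (n : ℝ) • Λ = (n : ℝ) • ((n : ℝ)⁻¹ • Λ₀ + Λ) := by
    rw [smul_add, smul_smul, mul_inv_cancel₀ hn', one_smul]
  have hdiff : postMean Λ Λ₀ μ₀ n (s + δ) - postMean Λ Λ₀ μ₀ n s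
      = (Λ₀ + (n : ℝ) • Λ)⁻¹ *ᵥ Λ *ᵥ δ := by
    simp only [postMean, mulVec_add]
    abel
  rw [hdiff, hscale, Matrix.inv_smul_of_ne_zero _ hn', smul_mulVec, mulVec_mulVec]

lemma exists_eventually_l1_postMean_add_sub_postMean_le {d : ℕ} {Λ : Matrix (Fin d) (Fin d) ℝ}
    (hΛ : IsUnit Λ) (Λ₀ : Matrix (Fin d) (Fin d) ℝ) (μ₀ : Fin d → ℝ) :
    ∃ K : ℝ, 0 ≤ K ∧ ∀ᶠ n : ℕ in atTop, ∀ s δ : Fin d → ℝ,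
      l1 (postMean Λ Λ₀ μ₀ n (s + δ) - postMean Λ Λ₀ μ₀ n s) ≤ K * l1 δ / n := by
  obtain ⟨K, hK⟩ := exists_gt (entrywiseL1 (1 : Matrix (Fin d) (Fin d) ℝ))
  have hlim := (continuous_entrywiseL1.tendsto _).comp
    ((Matrix.tendsto_inv_inv_smul_add_mul_atTop hΛ Λ₀).comp tendsto_natCast_atTop_atTop)
  have hnonneg : 0 ≤ entrywiseL1 (1 : Matrix (Fin d) (Fin d) ℝ) := by
    unfold entrywiseL1; positivity
  refine ⟨K, hnonneg.trans hK.le,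
    ((hlim.eventually_lt_const hK).and (eventually_ne_atTop 0)).mono ?_⟩
  rintro n ⟨hbound, hn⟩ s δ
  rw [postMean_add_sub_postMean Λ Λ₀ μ₀ hn, l1_smul, abs_inv, Nat.abs_cast, inv_mul_eq_div]
  gcongr
  exact (l1_mulVec_le _ δ).trans (mul_le_mul_of_nonneg_right hbound.le (l1_nonneg δ))

theorem stmt_6_general {d : ℕ} (Λ Λ₀ : Matrix (Fin d) (Fin d) ℝ)
    (hΛ : Λ.PosDef) (μ₀ : Fin d → ℝ)
    {Ω : Type*} [MeasurableSpace Ω] (P : Measure Ω) [IsProbabilityMeasure P]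
    (δ : Ω → Fin d → ℝ) (hmeas : ∀ j, Measurable fun ω => δ ω j)
    (s : ℕ → Fin d → ℝ) :
    ∀ α : ℝ, 0 < α → ∃ (C : ℝ) (N : ℕ), ∀ n ≥ N,
      P {ω | C / n <
          l1 (postMean Λ Λ₀ μ₀ n (s n + δ ω) - postMean Λ Λ₀ μ₀ n (s n))}
        < ENNReal.ofReal α := by
  intro α hα
  have hnoise : Measurable fun ω => l1 (δ ω) := Finset.measurable_sum _ fun j _ => (hmeas j).abs
  obtain ⟨M, hM⟩ := ((tendsto_measure_setOf_lt_atTop P hnoise.aemeasurable).eventually_lt_const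
    (ENNReal.ofReal_pos.2 hα)).exists
  obtain ⟨K, hK₀, hK⟩ := exists_eventually_l1_postMean_add_sub_postMean_le hΛ.isUnit Λ₀ μ₀
  obtain ⟨N, hN⟩ := eventually_atTop.1 hK
  refine ⟨K * M, N, fun n hn => (measure_mono fun ω (hω : K * M / n < _) => ?_).trans_lt hM⟩
  show M < l1 (δ ω)
  by_contra! hsmall
  refine hω.not_ge ?_
  calc _ ≤ K * l1 (δ ω) / n := hN n hn (s n) (δ ω)
    _ ≤ K * M / n := by gcongr

/-- **Asymptotic efficiency of the differentially private Gaussian-mean estimate.**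
With i.i.d. `Laplace(0, 2Bd/ε)` noise `δ` added to the sufficient statistic `n·x̄ = s n`,
the private posterior mean converges to the non-private one at rate `O(1/n)`: for every
`α > 0` there exist `C` and `N` such that `Pr{‖μ_DP − μ_NP‖₁ > C/n} < α` for all `n ≥ N`. -/
theorem stmt_6 {d : ℕ} (hd : 0 < d) (Λ Λ₀ : Matrix (Fin d) (Fin d) ℝ)
    (hΛ : Λ.PosDef) (hΛ₀ : Λ₀.PosDef) (μ₀ : Fin d → ℝ)
    (B ε : ℝ) (hB : 0 < B) (hε : 0 < ε)
    {Ω : Type*} [MeasurableSpace Ω] (P : Measure Ω) [IsProbabilityMeasure P]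
    (δ : Ω → Fin d → ℝ) (hmeas : ∀ j, Measurable fun ω => δ ω j)
    (hlaw : ∀ j, Measure.map (fun ω => δ ω j) P = laplaceMeasure (2 * B * d / ε))
    (hindep : iIndepFun
      (fun j ω => δ ω j) P)
    (s : ℕ → Fin d → ℝ) :
    ∀ α : ℝ, 0 < α → ∃ (C : ℝ) (N : ℕ), ∀ n ≥ N,
      P {ω | C / n <
          l1 (postMean Λ Λ₀ μ₀ n (s n + δ ω) - postMean Λ Λ₀ μ₀ n (s n))}
        < ENNReal.ofReal α :=
  stmt_6_general Λ Λ₀ hΛ μ₀ P δ hmeas s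
end

section
/- Let Λ, Λ₀ be positive definite d×d real matrices, β₀ ∈ ℝ^d, S a positive definite d×d matrix, t ∈ ℝ^d, and let Δ be a fixed symmetric d×d matrix and δ ∈ ℝ^d a fixed vector. Define, for n ∈ ℕ, the non-private posterior mean μ_NP(n) = (Λ₀ + Λ·nS)⁻¹(Λ·nt + Λ₀β₀) and the private posterior mean μ_DP(n) = (Λ₀ + Λ(nS + Δ))⁻¹(Λ(nt + δ) + Λ₀β₀) (defined for n large enough that the perturbed matrix is invertible). Then ‖μ_DP(n) − μ_NP(n)‖₁ → 0 as n → ∞. -/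
/-!
Both posterior means have the form `(n • A + B)⁻¹ *ᵥ (n • u + v)` with the same leading terms
`A = Λ * S` and `u = Λ *ᵥ t`; only the fixed perturbations `B`, `v` differ. Dividing through by
`n`, such an expression tends to `A⁻¹ *ᵥ u` by continuity of the matrix inverse at the invertible
matrix `Λ * S`, so the two means share a limit and their difference tends to `0`.
-/

open Matrix Filter

open Topology

namespace Matrix

variable {n : Type*} [Fintype n] [DecidableEq n]

theorem inv_smul_mulVec_smul {x : ℝ} (hx : x ≠ 0) (M : Matrix n n ℝ) (w : n → ℝ) :
    (x • M)⁻¹ *ᵥ (x • w) = M⁻¹ *ᵥ w := by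
  by_cases hM : IsUnit M.det
  · have : Invertible x := invertibleOfNonzero hx
    rw [Matrix.inv_smul M x hM, invOf_eq_inv, smul_mulVec, mulVec_smul, smul_smul,
      inv_mul_cancel₀ hx, one_smul]
  · have hxM : ¬IsUnit (x • M).det := by
      simpa [det_smul, hx] using hM
    simp [nonsing_inv_apply_not_isUnit _ hM, nonsing_inv_apply_not_isUnit _ hxM]

theorem tendsto_inv_smul_add_mulVec_smul_add_atTop {A : Matrix n n ℝ} (hA : IsUnit A.det)
    (B : Matrix n n ℝ) (u v : n → ℝ) :
    Tendsto (fun x : ℝ => (x • A + B)⁻¹ *ᵥ (x • u + v)) atTop (𝓝 (A⁻¹ *ᵥ u)) := by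
  -- substitute `y = x⁻¹`, which turns the limit at infinity into continuity at `0`
  have hcont : ContinuousAt (fun y : ℝ => (A + y • B)⁻¹ *ᵥ (u + y • v)) 0 := by
    have hinvA : ContinuousAt Inv.inv A :=
      continuousAt_matrix_inv A (by simpa using NormedRing.inverse_continuousAt hA.unit)
    have hinv : ContinuousAt (fun y : ℝ => (A + y • B)⁻¹) 0 :=
      hinvA.comp_of_eq (by fun_prop) (by simp)
    have hvec : ContinuousAt (fun y : ℝ => u + y • v) 0 := by fun_prop
    exact (continuous_fst.matrix_mulVec continuous_snd).continuousAt.comp (hinv.prodMk hvec)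
  have hlim := hcont.tendsto.comp tendsto_inv_atTop_zero
  simp only [zero_smul, add_zero] at hlim
  refine hlim.congr' ?_
  filter_upwards [eventually_ne_atTop 0] with x hx
  rw [Function.comp_apply, ← inv_smul_mulVec_smul hx, smul_add, smul_add, smul_smul, smul_smul,
    mul_inv_cancel₀ hx, one_smul, one_smul]

end Matrix

theorem continuous_l1 {d : ℕ} : Continuous (l1 (d := d)) :=
  continuous_finsetSum _ fun i _ => (continuous_apply i).abs

theorem l1_zero {d : ℕ} : l1 (0 : Fin d → ℝ) = 0 := by
  simp [l1]

theorem stmt_12_general {d : ℕ} (Λ Λ₀ : Matrix (Fin d) (Fin d) ℝ)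
    (hΛ : Λ.PosDef) (β₀ : Fin d → ℝ)
    (S : Matrix (Fin d) (Fin d) ℝ) (hS : S.PosDef) (t : Fin d → ℝ)
    (Δ : Matrix (Fin d) (Fin d) ℝ) (δ : Fin d → ℝ) :
    Tendsto (fun n : ℕ =>
        l1 ((Λ₀ + Λ * ((n : ℝ) • S + Δ))⁻¹ *ᵥ (Λ *ᵥ ((n : ℝ) • t + δ) + Λ₀ *ᵥ β₀)
          - (Λ₀ + Λ * ((n : ℝ) • S))⁻¹ *ᵥ (Λ *ᵥ ((n : ℝ) • t) + Λ₀ *ᵥ β₀)))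
      atTop (nhds 0) := by
  have hΛS : IsUnit (Λ * S).det := (isUnit_iff_isUnit_det _).mp (hΛ.isUnit.mul hS.isUnit)
  have hDP := (tendsto_inv_smul_add_mulVec_smul_add_atTop hΛS (Λ₀ + Λ * Δ) (Λ *ᵥ t)
    (Λ *ᵥ δ + Λ₀ *ᵥ β₀)).comp tendsto_natCast_atTop_atTop
  have hNP := (tendsto_inv_smul_add_mulVec_smul_add_atTop hΛS Λ₀ (Λ *ᵥ t)
    (Λ₀ *ᵥ β₀)).comp tendsto_natCast_atTop_atTop
  have hl1 := continuous_l1.continuousAt.tendsto.comp (hDP.sub hNP)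
  rw [sub_self, l1_zero] at hl1
  refine hl1.congr fun n => ?_
  have hDP_mat : Λ₀ + Λ * ((n : ℝ) • S + Δ) = (n : ℝ) • (Λ * S) + (Λ₀ + Λ * Δ) := by
    rw [mul_add, mul_smul_comm]; abel
  have hNP_mat : Λ₀ + Λ * ((n : ℝ) • S) = (n : ℝ) • (Λ * S) + Λ₀ := by
    rw [mul_smul_comm, add_comm]
  simp only [Function.comp_apply, hDP_mat, hNP_mat, mulVec_add, mulVec_smul, add_assoc]

/-- **Asymptotic consistency of differentially private Bayesian linear regression.**
With sufficient statistics `n·x̄x̄ = nS` (perturbed by a fixed symmetric matrix `Δ`) and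
`n·x̄y = nt` (perturbed by a fixed vector `δ`), the ℓ¹ distance between the private
posterior mean `μ_DP(n) = (Λ₀ + Λ(nS + Δ))⁻¹(Λ(nt + δ) + Λ₀β₀)` and the non-private one
`μ_NP(n) = (Λ₀ + Λ·nS)⁻¹(Λ·nt + Λ₀β₀)` tends to `0` as `n → ∞`. -/
theorem stmt_12 {d : ℕ} (Λ Λ₀ : Matrix (Fin d) (Fin d) ℝ)
    (hΛ : Λ.PosDef) (hΛ₀ : Λ₀.PosDef) (β₀ : Fin d → ℝ)
    (S : Matrix (Fin d) (Fin d) ℝ) (hS : S.PosDef) (t : Fin d → ℝ)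
    (Δ : Matrix (Fin d) (Fin d) ℝ) (hΔ : Δ.IsSymm) (δ : Fin d → ℝ) :
    Tendsto (fun n : ℕ =>
        l1 ((Λ₀ + Λ * ((n : ℝ) • S + Δ))⁻¹ *ᵥ (Λ *ᵥ ((n : ℝ) • t + δ) + Λ₀ *ᵥ β₀)
          - (Λ₀ + Λ * ((n : ℝ) • S))⁻¹ *ᵥ (Λ *ᵥ ((n : ℝ) • t) + Λ₀ *ᵥ β₀)))
      atTop (nhds 0) :=
  stmt_12_general Λ Λ₀ hΛ β₀ S hS t Δ δ
end
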